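/- In the free algebra A = ℂ⟨x,y⟩, for any f ∈ A the element (∂f/∂x)' x (∂f/∂x)'' + (∂f/∂y)' y (∂f/∂y)'' is congruent modulo [A,A] to deg(f)·f when f is homogeneous of total degree deg(f) (counting total degree in x and y); consequently if (∂f/∂x)''(∂f/∂x)' = 0 and (∂f/∂y)''(∂f/∂y)' = 0 then f ∈ ℂ ⊕ [A,A]. -/

import Mathlib

/-
The Euler operator `E f = (∂f/∂x)' x (∂f/∂x)'' + (∂f/∂y)' y (∂f/∂y)''` is a derivation of
`ℂ⟨x,y⟩` fixing `x` and `y`, so it multiplies every word by its length: on homogeneous `f` of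
degree `n` it is `n • f` on the nose. By cyclicity modulo `[A,A]`,
`E f ≡ x (∂f/∂x)''(∂f/∂x)' + y (∂f/∂y)''(∂f/∂y)'`, which vanishes under the hypotheses of the
second claim, so `E f ∈ [A,A]`. As `[A,A]` is spanned by commutators of words, it is a graded
subspace; hence every homogeneous component `n • f_n` of `E f` lies in `[A,A]`, and dividing by
`n ≠ 0` leaves only the scalar component `f_0` of `f`.
-/

open TensorProduct

noncomputable section

abbrev A2 := FreeAlgebra ℂ (Fin 2)

def Xg : A2 := FreeAlgebra.ι ℂ 0
def Yg : A2 := FreeAlgebra.ι ℂ 1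

def mu : A2 ⊗[ℂ] A2 →ₗ[ℂ] A2 := LinearMap.mul' ℂ A2

/-- `u ⊗ v ↦ v * u`. -/
def mulRev : A2 ⊗[ℂ] A2 →ₗ[ℂ] A2 :=
  mu ∘ₗ (TensorProduct.comm ℂ A2 A2).toLinearMap

def commSpan : Submodule ℂ A2 :=
  Submodule.span ℂ {z : A2 | ∃ a b : A2, z = a * b - b * a}

/-- The homogeneous component of total degree `n`: the span of products of `n` generators. -/
def homog (n : ℕ) : Submodule ℂ A2 :=
  Submodule.span ℂ {p : A2 | ∃ l : List (Fin 2), l.length = n ∧ p = (l.map (FreeAlgebra.ι ℂ)).prod}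



open Filter Finset

section DoubleDerivation

variable {R A : Type*} [CommSemiring R] [Semiring A] [Algebra R A]

/-- `sandwich D g f` is `(D f)' g (D f)''` in Sweedler notation. -/
def sandwich (D : A →ₗ[R] A ⊗[R] A) (g : A) : A →ₗ[R] A :=
  LinearMap.mul' R A ∘ₗ LinearMap.mulRight R (g ⊗ₜ[R] (1 : A)) ∘ₗ D

theorem sandwich_apply (D : A →ₗ[R] A ⊗[R] A) (g f : A) :
    sandwich D g f = LinearMap.mul' R A (D f * (g ⊗ₜ[R] 1)) := rfl

theorem mul'_tmul_one_mul (a : A) (w : A ⊗[R] A) :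
    LinearMap.mul' R A ((a ⊗ₜ[R] 1) * w) = a * LinearMap.mul' R A w := by
  induction w using TensorProduct.induction_on with
  | zero => simp
  | tmul u v => simp [mul_assoc]
  | add x y hx hy => rw [mul_add, map_add, map_add, hx, hy, mul_add]

theorem mul'_mul_tmul (w : A ⊗[R] A) (g v : A) :
    LinearMap.mul' R A (w * (g ⊗ₜ[R] v)) = LinearMap.mul' R A (w * (g ⊗ₜ[R] 1)) * v := by
  induction w using TensorProduct.induction_on with
  | zero => simp
  | tmul u v => simp [mul_assoc]
  | add x y hx hy => rw [add_mul, add_mul, map_add, map_add, hx, hy, add_mul]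

theorem sandwich_mul {D : A →ₗ[R] A ⊗[R] A}
    (hD : ∀ u v : A, D (u * v) = (u ⊗ₜ[R] (1 : A)) * D v + D u * ((1 : A) ⊗ₜ[R] v))
    (g u v : A) :
    sandwich D g (u * v) = u * sandwich D g v + sandwich D g u * v := by
  rw [sandwich_apply, hD, add_mul, map_add, mul_assoc, mul'_tmul_one_mul, mul_assoc,
    Algebra.TensorProduct.tmul_mul_tmul, one_mul, mul_one, mul'_mul_tmul (D u)]
  rfl

end DoubleDerivation

namespace FreeAlgebra

variable {R X : Type*} [CommRing R]

theorem basisFreeMonoid_apply (w : FreeMonoid X) :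
    basisFreeMonoid R X w = FreeMonoid.lift (ι R) w := by
  simp [basisFreeMonoid, equivMonoidAlgebraFreeMonoid]

variable (R X) in
theorem span_range_lift_ι :
    Submodule.span R (Set.range (FreeMonoid.lift (ι R : X → FreeAlgebra R X))) = ⊤ := by
  simpa [funext (basisFreeMonoid_apply (R := R) (X := X))] using (basisFreeMonoid R X).span_eq

variable (R) in
def homogProj (n : ℕ) : FreeAlgebra R X →ₗ[R] FreeAlgebra R X :=
  (basisFreeMonoid R X).constr R fun w => if w.length = n then basisFreeMonoid R X w else 0

theorem homogProj_lift_ι (n : ℕ) (w : FreeMonoid X) :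
    homogProj R n (FreeMonoid.lift (ι R) w) =
      if w.length = n then FreeMonoid.lift (ι R) w else 0 := by
  rw [← basisFreeMonoid_apply, homogProj, Module.Basis.constr_basis]

theorem eventually_sum_homogProj (f : FreeAlgebra R X) :
    ∀ᶠ N in atTop, ∑ n ∈ range N, homogProj R n f = f := by
  have hf : f ∈ Submodule.span R (Set.range (FreeMonoid.lift (ι R))) := by
    simp [span_range_lift_ι]
  induction hf using Submodule.span_induction with
  | mem _ hw =>
    obtain ⟨w, rfl⟩ := hw
    filter_upwards [eventually_gt_atTop w.length] with N hN
    simp [homogProj_lift_ι, hN]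
  | zero => simp
  | add x y _ _ hx hy =>
    filter_upwards [hx, hy] with N hxN hyN
    simp [sum_add_distrib, hxN, hyN]
  | smul c x _ hx =>
    filter_upwards [hx] with N hxN
    simp [← smul_sum, hxN]

theorem homogProj_zero_apply (f : FreeAlgebra R X) :
    homogProj R 0 f = algebraMap R _ (algebraMapInv f) := by
  suffices homogProj R 0 =
      Algebra.linearMap R _ ∘ₗ (algebraMapInv (R := R) (X := X)).toLinearMap by
    rw [this]; rfl
  refine LinearMap.ext_on_range (span_range_lift_ι R X) fun w => ?_
  rw [LinearMap.comp_apply, homogProj_lift_ι]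
  induction w using FreeMonoid.casesOn with
  | one => simp
  | of_mul x w => simp [algebraMapInv]

theorem sub_homogProj_zero_mem {S : Submodule R (FreeAlgebra R X)} {f : FreeAlgebra R X}
    (h : ∀ n ≠ 0, homogProj R n f ∈ S) : f - homogProj R 0 f ∈ S := by
  obtain ⟨N, hN⟩ := (eventually_sum_homogProj f).exists_forall_of_atTop
  have hsum : f - homogProj R 0 f = ∑ n ∈ range N, homogProj R (n + 1) f := by
    rw [sub_eq_iff_eq_add, ← sum_range_succ' (fun n => homogProj R n f), hN (N + 1) N.le_succ]
  rw [hsum]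
  exact S.sum_mem fun n _ => h (n + 1) n.succ_ne_zero

theorem lift_ι_eq_length_smul_of_leibniz {E : FreeAlgebra R X →ₗ[R] FreeAlgebra R X}
    (hE : ∀ u v, E (u * v) = u * E v + E u * v) (hι : ∀ x, E (ι R x) = ι R x)
    (w : FreeMonoid X) :
    E (FreeMonoid.lift (ι R) w) = (w.length : R) • FreeMonoid.lift (ι R) w := by
  induction w using FreeMonoid.inductionOn' with
  | one =>
    have h := hE 1 1
    simp only [mul_one, one_mul] at h
    simpa using left_eq_add.mp h
  | of_mul x w ih =>
    rw [map_mul, hE, ih, FreeMonoid.lift_eval_of, hι, FreeMonoid.length_mul]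
    simp [add_smul, add_comm]

theorem homogProj_apply_of_lift_ι_eq_length_smul {E : FreeAlgebra R X →ₗ[R] FreeAlgebra R X}
    (hE : ∀ w, E (FreeMonoid.lift (ι R) w) = (w.length : R) • FreeMonoid.lift (ι R) w)
    (n : ℕ) (f : FreeAlgebra R X) : homogProj R n (E f) = (n : R) • homogProj R n f := by
  suffices homogProj R n ∘ₗ E = (n : R) • homogProj R n from LinearMap.congr_fun this f
  refine LinearMap.ext_on_range (span_range_lift_ι R X) fun w => ?_
  simp only [LinearMap.comp_apply, hE, map_smul, homogProj_lift_ι, LinearMap.smul_apply]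
  split_ifs with h <;> simp [h]

theorem homogProj_commutator_lift_ι (n : ℕ) (u v : FreeMonoid X) :
    homogProj R n (FreeMonoid.lift (ι R) u * FreeMonoid.lift (ι R) v -
        FreeMonoid.lift (ι R) v * FreeMonoid.lift (ι R) u) =
      if u.length + v.length = n then
        FreeMonoid.lift (ι R) u * FreeMonoid.lift (ι R) v -
          FreeMonoid.lift (ι R) v * FreeMonoid.lift (ι R) u
      else 0 := by
  simp only [← map_mul, map_sub, homogProj_lift_ι, FreeMonoid.length_mul, add_comm v.length]
  split_ifs <;> simp

end FreeAlgebra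

open FreeAlgebra

-- `commSpan` is spanned by commutators of monomials, each of which is homogeneous.
theorem homogProj_mem_commSpan (n : ℕ) {z : A2} (hz : z ∈ commSpan) :
    homogProj ℂ n z ∈ commSpan := by
  let c : A2 →ₗ[ℂ] A2 →ₗ[ℂ] A2 := LinearMap.mul ℂ A2 - (LinearMap.mul ℂ A2).flip
  let words := Set.range (FreeMonoid.lift (ι ℂ : Fin 2 → A2))
  let gens := Set.image2 (fun a b => c a b) words words
  have h_words : commSpan ≤ Submodule.span ℂ gens := by
    rw [← Submodule.map₂_span_span, span_range_lift_ι]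
    refine Submodule.span_le.2 ?_
    rintro _ ⟨a, b, rfl⟩
    exact Submodule.apply_mem_map₂ c Submodule.mem_top Submodule.mem_top
  have h_proj : Submodule.span ℂ gens ≤ commSpan.comap (homogProj ℂ n) := by
    refine Submodule.span_le.2 ?_
    rintro _ ⟨_, ⟨u, rfl⟩, _, ⟨v, rfl⟩, rfl⟩
    change homogProj ℂ n (_ * _ - _ * _) ∈ commSpan
    rw [homogProj_commutator_lift_ι]
    split_ifs
    · exact Submodule.subset_span ⟨_, _, rfl⟩
    · exact zero_mem _
  exact h_proj (h_words hz)

theorem mu_mul_tmul_one_sub_mem_commSpan (g : A2) (w : A2 ⊗[ℂ] A2) :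
    mu (w * (g ⊗ₜ[ℂ] 1)) - g * mulRev w ∈ commSpan := by
  induction w using TensorProduct.induction_on with
  | zero => simp
  | tmul a b =>
    have h : mu ((a ⊗ₜ[ℂ] b) * (g ⊗ₜ[ℂ] 1)) - g * mulRev (a ⊗ₜ[ℂ] b) =
        a * (g * b) - g * b * a := by
      simp [mu, mulRev, mul_assoc]
    rw [h]
    exact Submodule.subset_span ⟨a, g * b, rfl⟩
  | add x y hx hy =>
    convert add_mem hx hy using 1
    simp only [add_mul, map_add, mul_add]
    abel

def euler (Dx Dy : A2 →ₗ[ℂ] A2 ⊗[ℂ] A2) : A2 →ₗ[ℂ] A2 :=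
  sandwich Dx Xg + sandwich Dy Yg

theorem euler_apply (Dx Dy : A2 →ₗ[ℂ] A2 ⊗[ℂ] A2) (f : A2) :
    euler Dx Dy f = mu (Dx f * (Xg ⊗ₜ[ℂ] 1)) + mu (Dy f * (Yg ⊗ₜ[ℂ] 1)) := rfl

theorem euler_mem_commSpan {Dx Dy : A2 →ₗ[ℂ] A2 ⊗[ℂ] A2} {f : A2}
    (hx : mulRev (Dx f) = 0) (hy : mulRev (Dy f) = 0) : euler Dx Dy f ∈ commSpan := by
  have hX := mu_mul_tmul_one_sub_mem_commSpan Xg (Dx f)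
  have hY := mu_mul_tmul_one_sub_mem_commSpan Yg (Dy f)
  rw [hx, mul_zero, sub_zero] at hX
  rw [hy, mul_zero, sub_zero] at hY
  exact add_mem hX hY

section Euler

variable {Dx Dy : A2 →ₗ[ℂ] A2 ⊗[ℂ] A2}
  (hLx : ∀ u v : A2,
    Dx (u * v) = (u ⊗ₜ[ℂ] (1 : A2)) * Dx v + Dx u * ((1 : A2) ⊗ₜ[ℂ] v))
  (hLy : ∀ u v : A2,
    Dy (u * v) = (u ⊗ₜ[ℂ] (1 : A2)) * Dy v + Dy u * ((1 : A2) ⊗ₜ[ℂ] v))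
  (hxx : Dx Xg = (1 : A2) ⊗ₜ[ℂ] (1 : A2)) (hxy : Dx Yg = 0)
  (hyx : Dy Xg = 0) (hyy : Dy Yg = (1 : A2) ⊗ₜ[ℂ] (1 : A2))
include hLx hLy hxx hxy hyx hyy

theorem euler_lift_ι (w : FreeMonoid (Fin 2)) :
    euler Dx Dy (FreeMonoid.lift (ι ℂ) w) = (w.length : ℂ) • FreeMonoid.lift (ι ℂ) w := by
  refine lift_ι_eq_length_smul_of_leibniz (fun u v => ?_) (fun i => ?_) w
  · simp only [euler, LinearMap.add_apply, sandwich_mul hLx, sandwich_mul hLy]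
    noncomm_ring
  · fin_cases i
    · change euler Dx Dy Xg = Xg
      simp [euler_apply, hxx, hyx, mu]
    · change euler Dx Dy Yg = Yg
      simp [euler_apply, hxy, hyy, mu]

theorem homog_le_eigenspace_euler (n : ℕ) :
    homog n ≤ Module.End.eigenspace (euler Dx Dy) n := by
  refine Submodule.span_le.2 ?_
  rintro _ ⟨l, rfl, rfl⟩
  rw [SetLike.mem_coe, Module.End.mem_eigenspace_iff, ← FreeMonoid.lift_ofList,
    euler_lift_ι hLx hLy hxx hxy hyx hyy]
  rfl

end Euler

/-- NC-Euler: for `f` homogeneous of total degree `n`,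
`(∂f/∂x)' x (∂f/∂x)'' + (∂f/∂y)' y (∂f/∂y)'' ≡ n·f mod [A,A]`; consequently, if
`(∂f/∂x)''(∂f/∂x)' = 0` and `(∂f/∂y)''(∂f/∂y)' = 0` then `f ∈ ℂ ⊕ [A,A]`. -/
theorem stmt_15 (Dx Dy : A2 →ₗ[ℂ] A2 ⊗[ℂ] A2)
    (hLx : ∀ u v : A2,
      Dx (u * v) = (u ⊗ₜ[ℂ] (1 : A2)) * Dx v + Dx u * ((1 : A2) ⊗ₜ[ℂ] v))
    (hLy : ∀ u v : A2,
      Dy (u * v) = (u ⊗ₜ[ℂ] (1 : A2)) * Dy v + Dy u * ((1 : A2) ⊗ₜ[ℂ] v))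
    (hxx : Dx Xg = (1 : A2) ⊗ₜ[ℂ] (1 : A2)) (hxy : Dx Yg = 0)
    (hyx : Dy Xg = 0) (hyy : Dy Yg = (1 : A2) ⊗ₜ[ℂ] (1 : A2)) :
    (∀ (n : ℕ) (f : A2), f ∈ homog n →
      mu (Dx f * (Xg ⊗ₜ[ℂ] (1 : A2))) + mu (Dy f * (Yg ⊗ₜ[ℂ] (1 : A2)))
        - (n : ℂ) • f ∈ commSpan) ∧
    (∀ f : A2, mulRev (Dx f) = 0 → mulRev (Dy f) = 0 →
      ∃ c : ℂ, f - algebraMap ℂ A2 c ∈ commSpan) := by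
  refine ⟨fun n f hf => ?_, fun f hx hy => ⟨algebraMapInv f, ?_⟩⟩
  · have h_eigen := homog_le_eigenspace_euler hLx hLy hxx hxy hyx hyy n hf
    rw [← euler_apply, Module.End.mem_eigenspace_iff.1 h_eigen, sub_self]
    exact zero_mem _
  · rw [← homogProj_zero_apply]
    refine sub_homogProj_zero_mem fun n hn => ?_
    have h := homogProj_mem_commSpan n (euler_mem_commSpan hx hy)
    rwa [homogProj_apply_of_lift_ι_eq_length_smul (euler_lift_ι hLx hLy hxx hxy hyx hyy),
      Submodule.smul_mem_iff _ (Nat.cast_ne_zero.2 hn)] at h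

end
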